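/- arXiv:1506.01692 — 3 statements merged into one kernel-verified Lean document; each statement's English description precedes it below -/
import Mathlib

section
/- Let m ≥ 2 and let I : [0, r] → [0, ∞) be monotone nondecreasing and absolutely continuous with I(0) = 0, and suppose I(r) ≤ K·r^m for some constant K > 0. Then for every subset W ⊂ (r/2, r) of full Lebesgue measure there exists r' ∈ W such that I'(r') ≤ 2m·(K)^{1/m}·I(r')^{(m−1)/m}. -/
/-!
Put `J = I ^ (1/m)`, monotone on `[r/2, r]`. If the inequality failed at every point of `W`,
then `I > 0` on `W` (a zero of `I ≥ 0` inside `(0, r)` is a minimum, where `I' = 0`), and the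
chain rule turns `I' > 2m K^{1/m} I^{(m-1)/m}` into `J' > 2 K^{1/m}` almost everywhere on
`(r/2, r)`. Since the derivative of a monotone function integrates to at most its increment,
`J r > J (r/2) + K^{1/m} r ≥ K^{1/m} r`, contradicting `I r ≤ K r^m`.
-/

open MeasureTheory Set Filter

theorem MonotoneOn.mul_sub_lt_sub_of_ae_lt_deriv {f : ℝ → ℝ} {a b κ : ℝ} (hab : a < b)
    (hf : MonotoneOn f (Icc a b)) (hκ : ∀ᵐ x ∂volume.restrict (Ioo a b), κ < deriv f x) :
    κ * (b - a) < f b - f a := by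
  rw [← uIcc_of_le hab.le] at hf
  have hlt : ∫ _ in a..b, κ < ∫ x in a..b, deriv f x := by
    refine intervalIntegral.integral_lt_integral_of_ae_le_of_measure_setOfPred_lt_ne_zero hab.le
      intervalIntegrable_const hf.intervalIntegrable_deriv ?_ ?_ <;>
      rw [← restrict_Ioo_eq_restrict_Ioc]
    · exact hκ.mono fun _ h => h.le
    · intro hnull
      have : NeZero (volume.restrict (Ioo a b)) := ⟨by simp [hab]⟩
      obtain ⟨x, hx, hx'⟩ := (hκ.and (measure_eq_zero_iff_ae_notMem.1 hnull)).exists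
      exact hx' hx
  have hle := hf.intervalIntegral_deriv_mem_uIcc
  rw [uIcc_of_le (sub_nonneg.2 (hf (by simp [hab.le]) (by simp [hab.le]) hab.le))] at hle
  simp only [intervalIntegral.integral_const, smul_eq_mul] at hlt
  linarith [hle.2]

theorem lt_deriv_rpow_one_div_of_lt_deriv {f : ℝ → ℝ} {x c m : ℝ} (hm : 0 < m) (hfx : 0 < f x)
    (hf : DifferentiableAt ℝ f x) (h : m * c * f x ^ ((m - 1) / m) < deriv f x) :
    c < deriv (fun y => f y ^ (1 / m)) x := by
  rw [(hf.hasDerivAt.rpow_const (Or.inl hfx.ne')).deriv]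
  have hpow : f x ^ ((m - 1) / m) * f x ^ (1 / m - 1) = 1 := by
    rw [← Real.rpow_add hfx, show (m - 1) / m + (1 / m - 1) = 0 by field_simp; ring,
      Real.rpow_zero]
  calc c = m * c * f x ^ ((m - 1) / m) * (1 / m * f x ^ (1 / m - 1)) := by
        rw [show m * c * f x ^ ((m - 1) / m) * (1 / m * f x ^ (1 / m - 1))
          = c * (m * (1 / m)) * (f x ^ ((m - 1) / m) * f x ^ (1 / m - 1)) by ring,
          hpow, mul_one_div_cancel hm.ne', mul_one, mul_one]
    _ < deriv f x * (1 / m * f x ^ (1 / m - 1)) := by gcongr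
    _ = _ := by ring

theorem good_radius_exists_general (m : ℕ) (hm : 2 ≤ m) (r K : ℝ) (hr : 0 < r) (hK : 0 < K)
    (I : ℝ → ℝ)
    (hmono : MonotoneOn I (Set.Icc 0 r))
    (hnonneg : ∀ s ∈ Set.Icc (0 : ℝ) r, 0 ≤ I s)
    (hIr : I r ≤ K * r ^ m)
    (W : Set ℝ) (hW : W ⊆ Set.Ioo (r / 2) r)
    (hWfull : volume (Set.Ioo (r / 2) r \ W) = 0) :
    ∃ r' ∈ W, deriv I r' ≤ 2 * m * K ^ (1 / (m : ℝ)) * I r' ^ ((m - 1 : ℝ) / m) := by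
  by_contra! hbad
  have hm0 : (0 : ℝ) < m := Nat.cast_pos.2 (by omega)
  set c := K ^ (1 / (m : ℝ))
  set J := fun t => I t ^ (1 / (m : ℝ))
  have hIcc : Icc (r / 2) r ⊆ Icc 0 r := Icc_subset_Icc_left (by positivity)
  have hJ' : ∀ w ∈ W, 2 * c < deriv J w := by
    intro w hw
    have hIw_nonneg := hnonneg w (hIcc (Ioo_subset_Icc_self (hW hw)))
    have hderiv_pos : 0 < deriv I w := lt_of_le_of_lt (by positivity) (hbad w hw)
    have hIw : 0 < I w := by
      refine hIw_nonneg.lt_of_ne fun hzero => ?_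
      have hmin : IsLocalMin I w := Filter.mem_of_superset
        (Icc_mem_nhds ((half_pos hr).trans (hW hw).1) (hW hw).2) fun x hx => by
          simpa [← hzero] using hnonneg x hx
      exact hderiv_pos.ne' hmin.deriv_eq_zero
    refine lt_deriv_rpow_one_div_of_lt_deriv hm0 hIw
      (differentiableAt_of_deriv_ne_zero hderiv_pos.ne') ?_
    linarith [hbad w hw]
  have hJmono : MonotoneOn J (Icc (r / 2) r) := fun s hs t ht hst =>
    Real.rpow_le_rpow (hnonneg s (hIcc hs)) (hmono (hIcc hs) (hIcc ht) hst) (by positivity)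
  have hW_ae : ∀ᵐ x ∂volume.restrict (Ioo (r / 2) r), x ∈ W := by
    rw [ae_restrict_iff' measurableSet_Ioo]
    filter_upwards [measure_eq_zero_iff_ae_notMem.1 hWfull] with x hx hxI
    by_contra hxW
    exact hx ⟨hxI, hxW⟩
  have hgrowth := hJmono.mul_sub_lt_sub_of_ae_lt_deriv (half_lt_self hr) (hW_ae.mono hJ')
  have hJr : J r ≤ c * r := by
    calc J r ≤ (K * r ^ m) ^ (1 / (m : ℝ)) :=
          Real.rpow_le_rpow (hnonneg r ⟨hr.le, le_rfl⟩) hIr (by positivity)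
      _ = c * r := by
          rw [Real.mul_rpow hK.le (by positivity), one_div,
            Real.pow_rpow_inv_natCast hr.le (by positivity), ← one_div]
  have hJhalf : 0 ≤ J (r / 2) := Real.rpow_nonneg (hnonneg _ (hIcc ⟨le_rfl, by linarith⟩)) _
  linarith

/-- choice of a good radius. If `I` is monotone nondecreasing,
absolutely continuous (encoded via FTC for its derivative), `I 0 = 0` and
`I r ≤ K r^m`, then every full-measure subset `W` of `(r/2, r)` contains a radius
`r'` at which `I'(r') ≤ 2m K^{1/m} I(r')^{(m-1)/m}`. -/
theorem good_radius_exists (m : ℕ) (hm : 2 ≤ m) (r K : ℝ) (hr : 0 < r) (hK : 0 < K)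
    (I : ℝ → ℝ)
    (hmono : MonotoneOn I (Set.Icc 0 r))
    (hnonneg : ∀ s ∈ Set.Icc (0 : ℝ) r, 0 ≤ I s)
    (hI0 : I 0 = 0)
    (hAC : ∀ a b : ℝ, 0 ≤ a → a ≤ b → b ≤ r → I b - I a = ∫ t in a..b, deriv I t)
    (hIr : I r ≤ K * r ^ m)
    (W : Set ℝ) (hW : W ⊆ Set.Ioo (r / 2) r)
    (hWfull : volume (Set.Ioo (r / 2) r \ W) = 0) :
    ∃ r' ∈ W, deriv I r' ≤ 2 * m * K ^ (1 / (m : ℝ)) * I r' ^ ((m - 1 : ℝ) / m) :=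
  good_radius_exists_general m hm r K hr hK I hmono hnonneg hIr W hW hWfull
end

section
/- Let g : (0, d) → (0, ∞) be monotone nondecreasing, let D ⊂ (0, d) be a set of full Lebesgue measure, and suppose there exist constants 0 < k ≤ 1 and δ ∈ (0, d) such that for all r ∈ (0, δ) ∩ D the estimate g(r)/r^m ≥ k^r · g(s)/s^m holds for all s ∈ (0, r] ∩ D. If additionally 0 < liminf_{r→0} g(r)/r^m ≤ limsup_{r→0} g(r)/r^m < ∞, then the limit lim_{r→0} g(r)/r^m exists. -/
open MeasureTheory Set Filter

/-- abstract density-existence argument. An asymptotic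
almost-monotonicity estimate `g(r)/r^m ≥ k^r · g(s)/s^m` (with `0 < k ≤ 1`),
valid on a full-measure set `D` of radii, together with
`0 < liminf_{r→0} g(r)/r^m ≤ limsup_{r→0} g(r)/r^m < ∞` (encoded by eventual
bounds `a ≤ g(r)/r^m ≤ b` with `a > 0`), forces the limit `lim_{r→0} g(r)/r^m`
to exist. -/
theorem density_ratio_limit_exists (m : ℕ) (d : ℝ) (hd : 0 < d) (g : ℝ → ℝ)
    (hpos : ∀ r ∈ Set.Ioo (0 : ℝ) d, 0 < g r)
    (hmono : MonotoneOn g (Set.Ioo 0 d))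
    (D : Set ℝ) (hD : D ⊆ Set.Ioo 0 d) (hDfull : volume (Set.Ioo 0 d \ D) = 0)
    (k δ : ℝ) (hk0 : 0 < k) (hk1 : k ≤ 1) (hδ : δ ∈ Set.Ioo 0 d)
    (hest : ∀ r ∈ Set.Ioo 0 δ ∩ D, ∀ s ∈ Set.Ioc 0 r ∩ D,
      k ^ r * (g s / s ^ m) ≤ g r / r ^ m)
    (a b : ℝ) (ha : 0 < a)
    (hliminf : ∀ᶠ r in nhdsWithin 0 (Set.Ioi 0), a ≤ g r / r ^ m)
    (hlimsup : ∀ᶠ r in nhdsWithin 0 (Set.Ioi 0), g r / r ^ m ≤ b) :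
    ∃ ℓ : ℝ, Tendsto (fun r => g r / r ^ m) (nhdsWithin 0 (Set.Ioi 0)) (nhds ℓ) := by
  set f : ℝ → ℝ := fun r => g r / r ^ m with hfdef
  set L : Filter ℝ := nhdsWithin 0 D with hLdef
  -- D hits every subinterval of (0, d]
  have hA : ∀ x y : ℝ, 0 ≤ x → x < y → y ≤ d → (D ∩ Set.Ioo x y).Nonempty := by
    intro x y hx hxy hyd
    by_contra h
    rw [Set.not_nonempty_iff_eq_empty] at h
    have hsub : Set.Ioo x y ⊆ Set.Ioo 0 d \ D := by
      intro z hz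
      refine ⟨⟨lt_of_le_of_lt hx hz.1, lt_of_lt_of_le hz.2 hyd⟩, fun hzD => ?_⟩
      have : z ∈ D ∩ Set.Ioo x y := ⟨hzD, hz⟩
      rw [h] at this; exact this
    have h0 := measure_mono_null hsub hDfull
    rw [Real.volume_Ioo, ENNReal.ofReal_eq_zero] at h0
    linarith
  have hLne : L.NeBot := by
    rw [hLdef, ← mem_closure_iff_nhdsWithin_neBot, Metric.mem_closure_iff]
    intro ε hε
    obtain ⟨y, hyD, hy⟩ := hA 0 (min ε d) le_rfl (lt_min hε hd) (min_le_right _ _)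
    refine ⟨y, hyD, ?_⟩
    rw [Real.dist_eq, abs_sub_comm, sub_zero, abs_of_pos hy.1]
    exact lt_of_lt_of_le hy.2 (min_le_left _ _)
  have hLle : L ≤ nhdsWithin 0 (Set.Ioi 0) :=
    nhdsWithin_mono 0 (hD.trans Set.Ioo_subset_Ioi_self)
  have hbL : ∀ᶠ r in L, f r ≤ b := hlimsup.filter_mono hLle
  have haL : ∀ᶠ r in L, a ≤ f r := hliminf.filter_mono hLle
  have hbdd : Filter.IsBoundedUnder (· ≤ ·) L f := ⟨b, eventually_map.2 hbL⟩
  have hbdd' : Filter.IsBoundedUnder (· ≥ ·) L f := ⟨a, eventually_map.2 haL⟩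
  have hcobdd : Filter.IsCoboundedUnder (· ≤ ·) L f := hbdd'.isCoboundedUnder_le
  set ℓ : ℝ := Filter.limsup f L with hldef
  have haℓ : a ≤ ℓ := Filter.le_limsup_of_frequently_le haL.frequently hbdd
  have hℓpos : 0 < ℓ := lt_of_lt_of_le ha haℓ
  -- Step 1: convergence along D
  have hstep1 : Tendsto f L (nhds ℓ) := by
    rw [tendsto_order]
    constructor
    · intro c hc
      rcases lt_or_ge c a with h | hca
      · exact haL.mono fun r hr => lt_of_lt_of_le h hr
      · set c' : ℝ := (c + ℓ) / 2 with hc'def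
        have hc'pos : 0 < c' := by have := lt_of_lt_of_le ha hca; simp [hc'def]; linarith
        have hcc' : c < c' := by simp [hc'def]; linarith
        have hc'ℓ : c' < ℓ := by simp [hc'def]; linarith
        have hfreq : ∃ᶠ s in L, c' < f s := Filter.frequently_lt_of_lt_limsup hcobdd hc'ℓ
        have hkr : Tendsto (fun r : ℝ => k ^ r * c') L (nhds c') := by
          have h1 : Tendsto (fun r : ℝ => k ^ r) (nhds 0) (nhds 1) := by
            have := (Real.continuousAt_const_rpow (ne_of_gt hk0) (b := 0)).tendsto
            rwa [Real.rpow_zero] at this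
          have h2 : Tendsto (fun r : ℝ => k ^ r) L (nhds 1) :=
            h1.mono_left (nhdsWithin_le_nhds : nhdsWithin (0:ℝ) D ≤ nhds 0)
          have := h2.mul_const c'
          rwa [one_mul] at this
        have hev1 : ∀ᶠ r in L, c < k ^ r * c' := hkr.eventually (eventually_gt_nhds hcc')
        have hev2 : ∀ᶠ r in L, r ∈ D := self_mem_nhdsWithin
        have hev3 : ∀ᶠ r in L, r < δ :=
          (eventually_lt_nhds hδ.1).filter_mono nhdsWithin_le_nhds
        filter_upwards [hev1, hev2, hev3] with r h1 h2 h3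
        have hrpos : 0 < r := (hD h2).1
        have hU : Set.Ioo (-r) r ∩ D ∈ L := by
          exact inter_mem (mem_nhdsWithin_of_mem_nhds (Ioo_mem_nhds (by linarith) hrpos))
            self_mem_nhdsWithin
        obtain ⟨s, hsU, hsf⟩ := Filter.frequently_iff.mp hfreq hU
        have hs0 : 0 < s := (hD hsU.2).1
        have hsr : s ≤ r := le_of_lt hsU.1.2
        have hkey := hest r ⟨⟨hrpos, h3⟩, h2⟩ s ⟨⟨hs0, hsr⟩, hsU.2⟩
        have hkpos : (0:ℝ) < k ^ r := Real.rpow_pos_of_pos hk0 r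
        calc c < k ^ r * c' := h1
          _ ≤ k ^ r * (g s / s ^ m) := by
              exact mul_le_mul_of_nonneg_left (le_of_lt hsf) hkpos.le
          _ ≤ g r / r ^ m := hkey
    · intro c hc
      exact Filter.eventually_lt_of_limsup_lt hc hbdd
  -- Step 2: extend to all radii
  refine ⟨ℓ, ?_⟩
  rw [tendsto_order]
  constructor
  · intro c hc
    rcases le_or_gt c 0 with h | hcpos
    · exact hliminf.mono fun r hr => lt_of_le_of_lt h (lt_of_lt_of_le ha hr)
    · set c' : ℝ := (c + ℓ) / 2 with hc'def
      have hcc' : c < c' := by simp [hc'def]; linarith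
      have hc'ℓ : c' < ℓ := by simp [hc'def]; linarith
      have hc'pos : 0 < c' := lt_trans hcpos hcc'
      -- choose θ ∈ (0,1) with c < c' * θ^m
      obtain ⟨θ, hθmem, hθ⟩ : ∃ θ : ℝ, θ ∈ Set.Ioo (0:ℝ) 1 ∧ c < c' * θ ^ m := by
        have ht : Tendsto (fun θ : ℝ => c' * θ ^ m) (nhdsWithin 1 (Set.Ioo 0 1)) (nhds c') := by
          have : Tendsto (fun θ : ℝ => c' * θ ^ m) (nhds 1) (nhds (c' * 1 ^ m)) :=
            ((continuous_pow m).tendsto 1).const_mul c'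
          simpa using this.mono_left nhdsWithin_le_nhds
        have hne : (nhdsWithin (1:ℝ) (Set.Ioo 0 1)).NeBot := by
          apply mem_closure_iff_nhdsWithin_neBot.mp
          rw [closure_Ioo (by norm_num : (0:ℝ) ≠ 1)]
          exact ⟨by norm_num, le_rfl⟩
        have := (ht.eventually (eventually_gt_nhds hcc')).and self_mem_nhdsWithin
        obtain ⟨θ, h1, h2⟩ := this.exists
        exact ⟨θ, h2, h1⟩
      have hev : ∀ᶠ s in L, c' < f s := hstep1.eventually (eventually_gt_nhds hc'ℓ)
      rw [hLdef, eventually_nhdsWithin_iff, Metric.eventually_nhds_iff] at hev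
      obtain ⟨ε₁, hε₁, h1⟩ := hev
      have hmem : Set.Ioo (0:ℝ) (min ε₁ d) ∈ nhdsWithin (0:ℝ) (Set.Ioi 0) :=
        Ioo_mem_nhdsGT_of_mem ⟨le_rfl, lt_min hε₁ hd⟩
      filter_upwards [hmem] with r hr
      have hrpos : 0 < r := hr.1
      have hrd : r < d := lt_of_lt_of_le hr.2 (min_le_right _ _)
      have hrε : r < ε₁ := lt_of_lt_of_le hr.2 (min_le_left _ _)
      obtain ⟨s, hsD, hs⟩ := hA (θ * r) r (mul_nonneg hθmem.1.le hrpos.le)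
        (by nlinarith [hθmem.1, hθmem.2]) hrd.le
      have hs0 : 0 < s := lt_trans (mul_pos hθmem.1 hrpos) hs.1
      have hsd : s < d := lt_trans hs.2 hrd
      have hsf : c' < f s := by
        apply h1 _ hsD
        rw [Real.dist_eq, sub_zero, abs_of_pos hs0]
        exact lt_trans hs.2 hrε
      have hgs : g s ≤ g r := hmono ⟨hs0, hsd⟩ ⟨hrpos, hrd⟩ hs.2.le
      have hθsr : θ ≤ s / r := by
        rw [le_div_iff₀ hrpos]; linarith [hs.1]
      have hkey : f s * (s / r) ^ m = g s / r ^ m := by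
        rw [hfdef]
        simp only
        rw [div_pow]
        field_simp
      calc c < c' * θ ^ m := hθ
        _ ≤ f s * θ ^ m := mul_le_mul_of_nonneg_right hsf.le (pow_nonneg hθmem.1.le m)
        _ ≤ f s * (s / r) ^ m := by
            apply mul_le_mul_of_nonneg_left (pow_le_pow_left₀ hθmem.1.le hθsr m)
            exact (div_pos (hpos s ⟨hs0, hsd⟩) (pow_pos hs0 m)).le
        _ = g s / r ^ m := hkey
        _ ≤ g r / r ^ m := (div_le_div_iff_of_pos_right (pow_pos hrpos m)).2 hgs
  · intro c hc
    set c' : ℝ := (ℓ + c) / 2 with hc'def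
    have hℓc' : ℓ < c' := by simp [hc'def]; linarith
    have hc'c : c' < c := by simp [hc'def]; linarith
    have hc'pos : 0 < c' := lt_trans hℓpos hℓc'
    obtain ⟨Θ, hΘ1, hΘ⟩ : ∃ Θ : ℝ, 1 < Θ ∧ c' * Θ ^ m < c := by
      have ht : Tendsto (fun Θ : ℝ => c' * Θ ^ m) (nhdsWithin 1 (Set.Ioi 1)) (nhds c') := by
        have : Tendsto (fun Θ : ℝ => c' * Θ ^ m) (nhds 1) (nhds (c' * 1 ^ m)) :=
          ((continuous_pow m).tendsto 1).const_mul c'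
        simpa using this.mono_left nhdsWithin_le_nhds
      have hne : (nhdsWithin (1:ℝ) (Set.Ioi 1)).NeBot := nhdsGT_neBot 1
      have := (ht.eventually (eventually_lt_nhds hc'c)).and self_mem_nhdsWithin
      obtain ⟨Θ, h1, h2⟩ := this.exists
      exact ⟨Θ, h2, h1⟩
    have hΘpos : 0 < Θ := lt_trans one_pos hΘ1
    have hev : ∀ᶠ s in L, f s < c' := hstep1.eventually (eventually_lt_nhds hℓc')
    rw [hLdef, eventually_nhdsWithin_iff, Metric.eventually_nhds_iff] at hev
    obtain ⟨ε₁, hε₁, h1⟩ := hev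
    have hmem : Set.Ioo (0:ℝ) (min (ε₁ / Θ) (d / Θ)) ∈ nhdsWithin (0:ℝ) (Set.Ioi 0) :=
      Ioo_mem_nhdsGT_of_mem ⟨le_rfl, lt_min (div_pos hε₁ hΘpos) (div_pos hd hΘpos)⟩
    filter_upwards [hmem] with r hr
    have hrpos : 0 < r := hr.1
    have hΘrε : Θ * r < ε₁ := by
      have : r < ε₁ / Θ := lt_of_lt_of_le hr.2 (min_le_left _ _)
      calc Θ * r < Θ * (ε₁ / Θ) := by exact mul_lt_mul_of_pos_left this hΘpos
        _ = ε₁ := by field_simp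
    have hΘrd : Θ * r ≤ d := by
      have : r < d / Θ := lt_of_lt_of_le hr.2 (min_le_right _ _)
      have := mul_lt_mul_of_pos_left this hΘpos
      rw [mul_div_cancel₀ d (ne_of_gt hΘpos)] at this
      exact this.le
    have hrd : r < d := by nlinarith
    obtain ⟨t, htD, ht⟩ := hA r (Θ * r) hrpos.le (by nlinarith) hΘrd
    have ht0 : 0 < t := lt_trans hrpos ht.1
    have htd : t < d := lt_of_lt_of_le ht.2 hΘrd
    have htf : f t < c' := by
      apply h1 _ htD
      rw [Real.dist_eq, sub_zero, abs_of_pos ht0]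
      exact lt_trans ht.2 hΘrε
    have hgt : g r ≤ g t := hmono ⟨hrpos, hrd⟩ ⟨ht0, htd⟩ ht.1.le
    have htrΘ : t / r ≤ Θ := by
      rw [div_le_iff₀ hrpos]; linarith [ht.2]
    have hkey : f t * (t / r) ^ m = g t / r ^ m := by
      rw [hfdef]
      simp only
      rw [div_pow]
      field_simp
    calc g r / r ^ m ≤ g t / r ^ m := (div_le_div_iff_of_pos_right (pow_pos hrpos m)).2 hgt
      _ = f t * (t / r) ^ m := hkey.symm
      _ ≤ c' * (t / r) ^ m :=
          mul_le_mul_of_nonneg_right htf.le (pow_nonneg (div_nonneg ht0.le hrpos.le) m)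
      _ ≤ c' * Θ ^ m := by
          exact mul_le_mul_of_nonneg_left
            (pow_le_pow_left₀ (div_nonneg ht0.le hrpos.le) htrΘ m) hc'pos.le
      _ < c := hΘ
end

section
/- Let X = ∪_{r=1}^N X_r with A ⊂ X and A_r ⊂ X_r for each r, and set B = A ∪ (∪_r A_r). For each r let L_r ⊂ Ȟ^{m−1}(A_r; G) \ {0} and suppose each X_r is a surface with coboundary ⊃ L_r (i.e., L_r is disjoint from the image of ι(X_r, A_r)*). Suppose L ⊂ Ȟ^{m−1}(A; G) \ {0} satisfies (ι(B,A)*)^{−1}(L) ⊂ ∪_r (ι(B,A_r)*)^{−1}(L_r). Then X is a surface with coboundary ⊃ L, i.e., L is disjoint from the image of ι(X, A)* : Ȟ^{m−1}(X; G) → Ȟ^{m−1}(A; G). -/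
open Set

/-- An abstract (reduced) Čech-style cohomology theory in a fixed degree with
coefficients in `G`, on subsets of a topological space `E`. -/
structure ReducedCechTheory (E : Type) [TopologicalSpace E] (G : Type) where
  H : Set E → Type
  zero : ∀ s : Set E, H s
  map : ∀ s t : Set E, C(s, t) → (H t → H s)
  map_id : ∀ (s : Set E) (x : H s), map s s (ContinuousMap.id s) x = x
  map_comp : ∀ (s t u : Set E) (f : C(s, t)) (g : C(t, u)) (x : H u),
    map s t f (map t u g x) = map s u (g.comp f) x
  map_zero : ∀ (s t : Set E) (f : C(s, t)), map s t f (zero t) = zero s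

/-- The restriction map induced by an inclusion `s ⊆ t`. -/
def ReducedCechTheory.res {E : Type} [TopologicalSpace E] {G : Type}
    (T : ReducedCechTheory E G) {s t : Set E} (h : s ⊆ t) : T.H t → T.H s :=
  T.map s t ⟨Set.inclusion h, continuous_inclusion h⟩


theorem ReducedCechTheory.res_res {E : Type} [TopologicalSpace E] {G : Type}
    (T : ReducedCechTheory E G) {s t u : Set E} (h1 : s ⊆ t) (h2 : t ⊆ u)
    (x : T.H u) : T.res h1 (T.res h2 x) = T.res (h1.trans h2) x := by
  unfold ReducedCechTheory.res
  rw [T.map_comp]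
  congr 1

/-- Lemma 11A: gluing of spanning conditions. With
`X = ⋃ X_r`, `A ⊆ X`, `A_r ⊆ X_r`, `B = A ∪ ⋃ A_r`, if each `X_r` spans `L_r`
(`L_r` disjoint from the image of `ι(X_r,A_r)*`) and
`(ι(B,A)*)⁻¹(L) ⊆ ⋃_r (ι(B,A_r)*)⁻¹(L_r)`, then `X` spans `L`. -/
theorem coboundary_gluing (n m : ℕ) (G : Type)
    (T : ReducedCechTheory (EuclideanSpace ℝ (Fin n)) G)
    (N : ℕ) (Xr Ar : Fin N → Set (EuclideanSpace ℝ (Fin n)))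
    (A : Set (EuclideanSpace ℝ (Fin n)))
    (hAX : A ⊆ ⋃ r, Xr r)
    (hArX : ∀ r, Ar r ⊆ Xr r)
    (hBX : (A ∪ ⋃ r, Ar r) ⊆ ⋃ r, Xr r)
    (L : Set (T.H A)) (hL : ∀ x ∈ L, x ≠ T.zero A)
    (Lr : ∀ r : Fin N, Set (T.H (Ar r)))
    (hLr : ∀ r, ∀ x ∈ Lr r, x ≠ T.zero (Ar r))
    (hspan : ∀ r, Disjoint (Lr r) (Set.range (T.res (hArX r))))
    (hkey : (T.res (Set.subset_union_left : A ⊆ A ∪ ⋃ r, Ar r)) ⁻¹' L ⊆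
      ⋃ r, (T.res ((Set.subset_iUnion Ar r).trans
        (Set.subset_union_right : (⋃ r, Ar r) ⊆ A ∪ ⋃ r, Ar r))) ⁻¹' (Lr r)) :
    Disjoint L (Set.range (T.res hAX)) := by
  rw [Set.disjoint_right]
  rintro y ⟨k, rfl⟩ hyL
  have hb : T.res (Set.subset_union_left : A ⊆ A ∪ ⋃ r, Ar r)
      (T.res hBX k) ∈ L := by
    rw [T.res_res]; exact hyL
  obtain ⟨S, ⟨r, rfl⟩, hr⟩ := hkey hb
  have hmem : T.res ((Set.subset_iUnion Ar r).trans
      (Set.subset_union_right : (⋃ r, Ar r) ⊆ A ∪ ⋃ r, Ar r))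
      (T.res hBX k) ∈ Lr r := hr
  rw [T.res_res] at hmem
  have : T.res (((Set.subset_iUnion Ar r).trans Set.subset_union_right).trans hBX) k
      = T.res (hArX r) (T.res ((Set.subset_iUnion Xr r) : Xr r ⊆ ⋃ r, Xr r) k) := by
    rw [T.res_res]
  rw [this] at hmem
  exact Set.disjoint_left.mp (hspan r) hmem ⟨_, rfl⟩
end
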